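/- arXiv:1411.4397 — 4 statements merged into one kernel-verified Lean document; each statement's English description precedes it below -/
import Mathlib

section
/- Define the channel Λ from 2×2 matrices to 4×4 matrices by Λ(X) = (4/3)·P(X ⊗ I₂/2)P, where P is the projector onto the symmetric subspace of ℂ²⊗ℂ². Let ρ be a 4×4 density matrix with two-qubit Bloch representation {x, y, T}, and apply Λ to each of its two qubits, obtaining the four-qubit state (Λ⊗Λ)(ρ) on qubits (a₁,a₂,b₁,b₂), where a₁,a₂ are the two clones of the first qubit and b₁,b₂ of the second. Then tracing out one clone on each side (qubits a₂ and b₂) yields (1/4)·(I₄ + (2/3)·Σᵢ xᵢ σᵢ⊗I₂ + (2/3)·Σᵢ yᵢ I₂⊗σᵢ + (4/9)·Σᵢⱼ tᵢⱼ σᵢ⊗σⱼ); i.e. the nonlocal output pairs ρ̃₁₄ = ρ̃₂₃ of the local Buzek–Hillery cloner have Bloch representation {(2/3)x, (2/3)y, (4/9)T}. -/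
/-!
Tracing out one clone of the Buzek–Hillery cloner leaves the shrinking map
`D X = (2/3)·X + (tr X / 6)·I`, which fixes `I` and multiplies every traceless Pauli matrix
by `2/3`. Partial traces on each side commute with the local channel `Λ ⊗ Λ`, so the
two-qubit output is `(D ⊗ D)(ρ)`: the local Bloch vectors shrink by `2/3` and the
correlation matrix by `(2/3)² = 4/9`.
-/

open Matrix Kronecker
open scoped ComplexOrder

/-- The three Pauli matrices. -/
noncomputable def pauli : Fin 3 → Matrix (Fin 2) (Fin 2) ℂ :=
  ![!![0, 1; 1, 0], !![0, -Complex.I; Complex.I, 0], !![1, 0; 0, -1]]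

/-- The swap operator on `ℂᵈ ⊗ ℂᵈ`. -/
noncomputable def swapOp (d : Type*) [DecidableEq d] : Matrix (d × d) (d × d) ℂ :=
  Matrix.of fun p q => if p.1 = q.2 ∧ p.2 = q.1 then 1 else 0

/-- The projector `P = (I + S)/2` onto the symmetric subspace of `ℂᵈ ⊗ ℂᵈ`. -/
noncomputable def symProj (d : Type*) [DecidableEq d] : Matrix (d × d) (d × d) ℂ :=
  (1/2 : ℂ) • (1 + swapOp d)

/-- The Buzek–Hillery cloning channel on one qubit: `Λ(X) = (4/3)·P(X ⊗ I₂/2)P`. -/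
noncomputable def bhChannel (X : Matrix (Fin 2) (Fin 2) ℂ) :
    Matrix (Fin 2 × Fin 2) (Fin 2 × Fin 2) ℂ :=
  (4/3 : ℂ) • (symProj (Fin 2) * (X ⊗ₖ ((1/2 : ℂ) • (1 : Matrix (Fin 2) (Fin 2) ℂ)))
    * symProj (Fin 2))

/-- The tensor product channel `Λ ⊗ Λ` applied to a two-qubit state `ρ`, giving a
four-qubit state on `(a₁, a₂, b₁, b₂)` where `(a₁, a₂)` are the clones of the first qubit
and `(b₁, b₂)` those of the second. -/
noncomputable def bhChannelTwo (ρ : Matrix (Fin 2 × Fin 2) (Fin 2 × Fin 2) ℂ) :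
    Matrix ((Fin 2 × Fin 2) × (Fin 2 × Fin 2)) ((Fin 2 × Fin 2) × (Fin 2 × Fin 2)) ℂ :=
  Matrix.of fun p q => ∑ i : Fin 2, ∑ j : Fin 2, ∑ k : Fin 2, ∑ l : Fin 2,
    ρ (i, k) (j, l) * bhChannel (Matrix.single i j 1) p.1 q.1
      * bhChannel (Matrix.single k l 1) p.2 q.2

section TensorMap

variable {R : Type*} [CommSemiring R] {m m' n n' κ κ' : Type*}
  [Fintype m] [Fintype m'] [DecidableEq m] [DecidableEq m']

def tensorMap (Φ : Matrix m m R →ₗ[R] Matrix n n R) (Ψ : Matrix m' m' R →ₗ[R] Matrix n' n' R) :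
    Matrix (m × m') (m × m') R →ₗ[R] Matrix (n × n') (n × n') R where
  toFun ρ := of fun p q => ∑ i, ∑ j, ∑ k, ∑ l,
    ρ (i, k) (j, l) * Φ (single i j 1) p.1 q.1 * Ψ (single k l 1) p.2 q.2
  map_add' ρ σ := by
    ext p q
    simp only [of_apply, Matrix.add_apply, add_mul, Finset.sum_add_distrib]
  map_smul' c ρ := by
    ext p q
    simp only [of_apply, Matrix.smul_apply, smul_eq_mul, Finset.mul_sum, mul_assoc,
      RingHom.id_apply]

theorem LinearMap.matrix_apply_eq_sum_single (Φ : Matrix m m R →ₗ[R] Matrix n n R)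
    (A : Matrix m m R) (a b : n) :
    Φ A a b = ∑ i, ∑ j, A i j * Φ (Matrix.single i j 1) a b := by
  have hA : A = ∑ i, ∑ j, A i j • Matrix.single i j (1 : R) := by
    simpa only [smul_single, smul_eq_mul, mul_one] using matrix_eq_sum_single A
  conv_lhs => rw [hA]
  simp only [map_sum, map_smul, Matrix.sum_apply, Matrix.smul_apply, smul_eq_mul]

theorem tensorMap_kronecker (Φ : Matrix m m R →ₗ[R] Matrix n n R)
    (Ψ : Matrix m' m' R →ₗ[R] Matrix n' n' R) (A : Matrix m m R) (B : Matrix m' m' R) :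
    tensorMap Φ Ψ (A ⊗ₖ B) = Φ A ⊗ₖ Ψ B := by
  ext ⟨a, a'⟩ ⟨b, b'⟩
  simp only [tensorMap, LinearMap.coe_mk, AddHom.coe_mk, of_apply, kroneckerMap_apply,
    Φ.matrix_apply_eq_sum_single A, Ψ.matrix_apply_eq_sum_single B, Finset.sum_mul_sum]
  refine Finset.sum_congr rfl fun i _ => Finset.sum_comm.trans <| Finset.sum_congr rfl
    fun k _ => Finset.sum_congr rfl fun j _ => Finset.sum_congr rfl fun l _ => ?_
  ring

theorem tensorMap_one [DecidableEq n] [DecidableEq n'] (Φ : Matrix m m R →ₗ[R] Matrix n n R)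
    (Ψ : Matrix m' m' R →ₗ[R] Matrix n' n' R) :
    tensorMap Φ Ψ 1 = Φ 1 ⊗ₖ Ψ 1 := by
  rw [← tensorMap_kronecker, one_kronecker_one]

variable [Fintype κ] [Fintype κ']

def traceRight : Matrix (n × κ) (n × κ) R →ₗ[R] Matrix n n R where
  toFun M := of fun a b => ∑ c, M (a, c) (b, c)
  map_add' M N := by
    ext a b
    simp only [of_apply, Matrix.add_apply, Finset.sum_add_distrib]
  map_smul' r M := by
    ext a b
    simp only [of_apply, Matrix.smul_apply, smul_eq_mul, Finset.mul_sum, RingHom.id_apply]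

theorem traceRight_tensorMap (Φ : Matrix m m R →ₗ[R] Matrix (n × κ) (n × κ) R)
    (Ψ : Matrix m' m' R →ₗ[R] Matrix (n' × κ') (n' × κ') R) (ρ : Matrix (m × m') (m × m') R) :
    (of fun (a b : n × n') => ∑ c : κ, ∑ d : κ',
        tensorMap Φ Ψ ρ ((a.1, c), (a.2, d)) ((b.1, c), (b.2, d)))
      = tensorMap (traceRight ∘ₗ Φ) (traceRight ∘ₗ Ψ) ρ := by
  ext a b
  simp only [tensorMap, traceRight, LinearMap.coe_mk, AddHom.coe_mk, LinearMap.coe_comp,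
    Function.comp_apply, of_apply, Finset.sum_mul, Finset.mul_sum]
  simp_rw [Finset.sum_comm (s := (Finset.univ : Finset κ)),
    Finset.sum_comm (s := (Finset.univ : Finset κ'))]

end TensorMap

theorem trace_pauli (i : Fin 3) : (pauli i).trace = 0 := by
  fin_cases i <;> simp [pauli, trace_fin_two]

@[simps]
noncomputable def bhChannelLinear :
    Matrix (Fin 2) (Fin 2) ℂ →ₗ[ℂ] Matrix (Fin 2 × Fin 2) (Fin 2 × Fin 2) ℂ where
  toFun := bhChannel
  map_add' X Y := by
    simp only [bhChannel, add_kronecker, mul_add, add_mul, smul_add]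
  map_smul' c X := by
    simp only [bhChannel, smul_kronecker, mul_smul_comm, smul_mul_assoc, smul_comm c,
      RingHom.id_apply]

theorem traceRight_bhChannel (X : Matrix (Fin 2) (Fin 2) ℂ) :
    traceRight (bhChannel X) = (2/3 : ℂ) • X + (X.trace / 6) • 1 := by
  ext a b
  fin_cases a <;> fin_cases b <;>
  · simp only [traceRight, bhChannel, symProj, swapOp, LinearMap.coe_mk, AddHom.coe_mk, of_apply,
      Matrix.add_apply, Matrix.smul_apply, mul_apply, kroneckerMap_apply, one_apply,
      Fintype.sum_prod_type, Fin.sum_univ_two, trace_fin_two, Prod.mk.injEq, smul_eq_mul]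
    norm_num
    ring

theorem traceRight_bhChannel_one : traceRight (bhChannel 1) = 1 := by
  rw [traceRight_bhChannel, trace_one, ← add_smul]
  norm_num

theorem traceRight_bhChannel_pauli (i : Fin 3) :
    traceRight (bhChannel (pauli i)) = (2/3 : ℂ) • pauli i := by
  rw [traceRight_bhChannel, trace_pauli, zero_div, zero_smul, add_zero]

theorem bhChannelTwo_eq_tensorMap (ρ : Matrix (Fin 2 × Fin 2) (Fin 2 × Fin 2) ℂ) :
    bhChannelTwo ρ = tensorMap bhChannelLinear bhChannelLinear ρ :=
  rfl

theorem local_cloner_nonlocal_output_general (x y : Fin 3 → ℝ) (t : Fin 3 → Fin 3 → ℝ)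
    (ρ : Matrix (Fin 2 × Fin 2) (Fin 2 × Fin 2) ℂ)
    (hρ : ρ = (1/4 : ℂ) • ((1 : Matrix (Fin 2 × Fin 2) (Fin 2 × Fin 2) ℂ)
        + ∑ i : Fin 3, (x i : ℂ) • (pauli i ⊗ₖ 1)
        + ∑ i : Fin 3, (y i : ℂ) • ((1 : Matrix (Fin 2) (Fin 2) ℂ) ⊗ₖ pauli i)
        + ∑ i : Fin 3, ∑ j : Fin 3, (t i j : ℂ) • (pauli i ⊗ₖ pauli j))) :
    (Matrix.of fun (a b : Fin 2 × Fin 2) => ∑ c : Fin 2, ∑ d : Fin 2,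
        bhChannelTwo ρ ((a.1, c), (a.2, d)) ((b.1, c), (b.2, d)))
    = (1/4 : ℂ) • ((1 : Matrix (Fin 2 × Fin 2) (Fin 2 × Fin 2) ℂ)
        + (2/3 : ℂ) • ∑ i : Fin 3, (x i : ℂ) • (pauli i ⊗ₖ 1)
        + (2/3 : ℂ) • ∑ i : Fin 3, (y i : ℂ) • ((1 : Matrix (Fin 2) (Fin 2) ℂ) ⊗ₖ pauli i)
        + (4/9 : ℂ) • ∑ i : Fin 3, ∑ j : Fin 3, (t i j : ℂ) • (pauli i ⊗ₖ pauli j)) := by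
  rw [bhChannelTwo_eq_tensorMap, traceRight_tensorMap, hρ]
  simp only [map_add, map_smul, map_sum, tensorMap_one, tensorMap_kronecker, LinearMap.comp_apply,
    bhChannelLinear_apply, traceRight_bhChannel_one, traceRight_bhChannel_pauli]
  simp only [one_kronecker_one, smul_kronecker, kronecker_smul, Finset.smul_sum, smul_smul]
  norm_num [mul_comm]

/-- Applying the Buzek–Hillery channel `Λ(X) = (4/3)·P(X ⊗ I₂/2)P` to each
qubit of a two-qubit state `ρ` with Bloch representation `{x, y, T}` and then tracing out
one clone on each side (qubits `a₂` and `b₂`) yields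
`(1/4)(I₄ + (2/3)Σᵢ xᵢ σᵢ⊗I₂ + (2/3)Σᵢ yᵢ I₂⊗σᵢ + (4/9)Σᵢⱼ tᵢⱼ σᵢ⊗σⱼ)`, i.e. the nonlocal
output pairs `ρ̃₁₄ = ρ̃₂₃` of the local Buzek–Hillery cloner have Bloch representation
`{(2/3)x, (2/3)y, (4/9)T}`. -/
theorem local_cloner_nonlocal_output (x y : Fin 3 → ℝ) (t : Fin 3 → Fin 3 → ℝ)
    (ρ : Matrix (Fin 2 × Fin 2) (Fin 2 × Fin 2) ℂ)
    (hρ : ρ = (1/4 : ℂ) • ((1 : Matrix (Fin 2 × Fin 2) (Fin 2 × Fin 2) ℂ)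
        + ∑ i : Fin 3, (x i : ℂ) • (pauli i ⊗ₖ 1)
        + ∑ i : Fin 3, (y i : ℂ) • ((1 : Matrix (Fin 2) (Fin 2) ℂ) ⊗ₖ pauli i)
        + ∑ i : Fin 3, ∑ j : Fin 3, (t i j : ℂ) • (pauli i ⊗ₖ pauli j)))
    (hpsd : ρ.PosSemidef) :
    (Matrix.of fun (a b : Fin 2 × Fin 2) => ∑ c : Fin 2, ∑ d : Fin 2,
        bhChannelTwo ρ ((a.1, c), (a.2, d)) ((b.1, c), (b.2, d)))
    = (1/4 : ℂ) • ((1 : Matrix (Fin 2 × Fin 2) (Fin 2 × Fin 2) ℂ)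
        + (2/3 : ℂ) • ∑ i : Fin 3, (x i : ℂ) • (pauli i ⊗ₖ 1)
        + (2/3 : ℂ) • ∑ i : Fin 3, (y i : ℂ) • ((1 : Matrix (Fin 2) (Fin 2) ℂ) ⊗ₖ pauli i)
        + (4/9 : ℂ) • ∑ i : Fin 3, ∑ j : Fin 3, (t i j : ℂ) • (pauli i ⊗ₖ pauli j)) :=
  local_cloner_nonlocal_output_general x y t ρ hρ
end

section
/- Let p ∈ [0,1], α ∈ [0,1], β = √(1−α²), and consider the two-qubit matrix ρ̃ = (1/4)·(I₄ + (2/3)p(2α²−1)(σ₃⊗I₂ + I₂⊗σ₃) + (1/3)·Σⱼ σⱼ⊗σⱼ). Then the partial transpose ρ̃^{T₂} is positive semidefinite (equivalently, ρ̃ is separable) if and only if either 0 ≤ p ≤ √3/2, or √3/2 < p ≤ 1 and (2p−√3)/(4p) ≤ α² ≤ (√3+2p)/(4p). -/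
open Matrix Kronecker
open scoped ComplexOrder

/-- Partial transpose on the second qubit:
`(ρ^{T₂})_{(i,μ),(j,ν)} = ρ_{(i,ν),(j,μ)}`. -/
noncomputable def ptranspose (ρ : Matrix (Fin 2 × Fin 2) (Fin 2 × Fin 2) ℂ) :
    Matrix (Fin 2 × Fin 2) (Fin 2 × Fin 2) ℂ :=
  Matrix.of fun p q => ρ (p.1, q.2) (q.1, p.2)

/-!
With `c = (2/3) p (α² − β²)`, the partial transpose of `ρ̃` is, in the basis `00, 01, 10, 11`,
`(1/4) (4/3 + 2c, 2/3, 2/3, 4/3 − 2c)` on the diagonal plus the entry `1/6` at `(00, 11)` and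
`(11, 00)`. It is therefore positive semidefinite iff the `2 × 2` block on `00, 11` is, i.e. iff
`(4/3)² − 4c² ≥ (2/3)²`, that is `c² ≤ 1/3`. Solving `|2p(2α² − 1)| ≤ √3` for `α²` gives the
stated range, which is all of `[0, 1]` as soon as `2p ≤ √3`.
-/

lemma Matrix.IsHermitian.ptranspose {ρ : Matrix (Fin 2 × Fin 2) (Fin 2 × Fin 2) ℂ}
    (h : ρ.IsHermitian) : (ptranspose ρ).IsHermitian := by
  ext ⟨i, μ⟩ ⟨j, ν⟩
  simpa [_root_.ptranspose, conjTranspose_apply] using h.apply (i, ν) (j, μ)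

lemma Matrix.IsHermitian.kronecker {R m n : Type*} [CommSemiring R] [StarRing R]
    {A : Matrix m m R} {B : Matrix n n R}
    (hA : A.IsHermitian) (hB : B.IsHermitian) : (A ⊗ₖ B).IsHermitian := by
  rw [IsHermitian, conjTranspose_kronecker, hA.eq, hB.eq]

lemma pauli_isHermitian (j : Fin 3) : (pauli j).IsHermitian := by
  fin_cases j <;>
  · ext i k
    fin_cases i <;> fin_cases k <;> simp [pauli, conjTranspose_apply]

/-- `ρ̃₁₃`, with `c` the common `z`-component of its two Bloch vectors. -/
noncomputable def localCloneOutput (c : ℝ) : Matrix (Fin 2 × Fin 2) (Fin 2 × Fin 2) ℂ :=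
  (1/4 : ℂ) • (1 + (c : ℂ) • (pauli 2 ⊗ₖ 1 + 1 ⊗ₖ pauli 2)
    + (1/3 : ℂ) • ∑ j : Fin 3, pauli j ⊗ₖ pauli j)

lemma localCloneOutput_isHermitian (c : ℝ) : (localCloneOutput c).IsHermitian := by
  have hσ := pauli_isHermitian
  have h1 : (1 : Matrix (Fin 2) (Fin 2) ℂ).IsHermitian := isHermitian_one
  refine IsHermitian.smul ?_ (by simp [IsSelfAdjoint])
  refine (isHermitian_one.add (IsHermitian.smul ?_ (Complex.conj_ofReal c))).add
    (IsHermitian.smul ?_ (by simp [IsSelfAdjoint]))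
  · exact ((hσ 2).kronecker h1).add (h1.kronecker (hσ 2))
  · exact isSelfAdjoint_sum _ fun j _ => (hσ j).kronecker (hσ j)

/-- The quadratic form of `ρ̃^{T₂}` on real vectors supported on `00, 11`. -/
noncomputable def blockForm (c u v : ℝ) : ℝ :=
  (1/3 + c/2) * u ^ 2 + (1/3) * u * v + (1/3 - c/2) * v ^ 2

lemma dotProduct_mulVec_ptranspose_localCloneOutput (c : ℝ) (x : Fin 2 × Fin 2 → ℂ) :
    star x ⬝ᵥ ptranspose (localCloneOutput c) *ᵥ x =
      ((blockForm c (x (0, 0)).re (x (1, 1)).re + blockForm c (x (0, 0)).im (x (1, 1)).im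
        + (Complex.normSq (x (0, 1)) + Complex.normSq (x (1, 0))) / 6 : ℝ) : ℂ) := by
  apply Complex.ext <;>
  simp [localCloneOutput, blockForm, ptranspose, pauli, mulVec, dotProduct, Fintype.sum_prod_type,
    Fin.sum_univ_two, Fin.sum_univ_three, one_apply, Complex.normSq_apply, -Complex.ofReal_pow] <;>
  ring

lemma blockForm_nonneg_iff (c : ℝ) : (∀ u v, 0 ≤ blockForm c u v) ↔ c ^ 2 ≤ 1/3 := by
  constructor
  · intro h
    -- the forms at these two points sum to `(2/3) ((1/3 + c/2)(1/3 - c/2) - 1/36)`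
    have h₁ := h (1/6) (-(1/3 + c/2))
    have h₂ := h (-(1/3 - c/2)) (1/6)
    unfold blockForm at h₁ h₂
    nlinarith
  · intro hc u v
    have hA : 0 < 1/3 + c/2 := by nlinarith
    have hsq : 36 * (1/3 + c/2) * blockForm c u v
        = (6 * (1/3 + c/2) * u + v) ^ 2 + (3 - 9 * c ^ 2) * v ^ 2 := by
      unfold blockForm; ring
    refine nonneg_of_mul_nonneg_right (a := 36 * (1/3 + c/2)) ?_ (by positivity)
    rw [hsq]
    have : 0 ≤ 3 - 9 * c ^ 2 := by linarith
    positivity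

lemma posSemidef_ptranspose_localCloneOutput_iff (c : ℝ) :
    (ptranspose (localCloneOutput c)).PosSemidef ↔ c ^ 2 ≤ 1/3 := by
  rw [← blockForm_nonneg_iff]
  constructor
  · intro h u v
    have := h.dotProduct_mulVec_nonneg fun q => (!![(u : ℂ), 0; 0, (v : ℂ)] q.1 q.2)
    rw [dotProduct_mulVec_ptranspose_localCloneOutput, Complex.zero_le_real] at this
    simpa [blockForm] using this
  · intro h
    refine PosSemidef.of_dotProduct_mulVec_nonneg
      (localCloneOutput_isHermitian c).ptranspose fun x => ?_
    rw [dotProduct_mulVec_ptranspose_localCloneOutput, Complex.zero_le_real]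
    have := h (x (0, 0)).re (x (1, 1)).re
    have := h (x (0, 0)).im (x (1, 1)).im
    have := Complex.normSq_nonneg (x (0, 1))
    have := Complex.normSq_nonneg (x (1, 0))
    linarith

lemma cloneBloch_sq_le_third_iff (p t : ℝ) (hp0 : 0 ≤ p) (hp1 : p ≤ 1) (ht0 : 0 ≤ t) (ht1 : t ≤ 1) :
    (2/3 * p * (2*t - 1)) ^ 2 ≤ 1/3
    ↔ ((0 ≤ p ∧ p ≤ Real.sqrt 3 / 2) ∨
       (Real.sqrt 3 / 2 < p ∧ p ≤ 1 ∧
        (2*p - Real.sqrt 3) / (4*p) ≤ t ∧ t ≤ (Real.sqrt 3 + 2*p) / (4*p))) := by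
  have hsq : (2/3 * p * (2*t - 1)) ^ 2 ≤ 1/3 ↔ (4*p*t - 2*p) ^ 2 ≤ 3 := by
    constructor <;> intro h <;> nlinarith
  rw [hsq, Real.sq_le (by norm_num)]
  have hs : 0 < Real.sqrt 3 := by positivity
  rcases le_or_gt p (Real.sqrt 3 / 2) with hp | hp
  · simp only [hp0, hp, and_self, true_or, iff_true]
    constructor <;> nlinarith
  · have h4p : 0 < 4 * p := by linarith
    simp only [not_le.2 hp, hp, hp1, div_le_iff₀ h4p, le_div_iff₀ h4p, and_false, false_or,
      true_and]
    constructor <;> rintro ⟨h1, h2⟩ <;> constructor <;> linarith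

/-- Separability range of the local outputs of werner-like states under local
cloning.  The local output `ρ̃₁₃ = {(2/3)xʷ, (2/3)xʷ, (1/3)I₃}` of the Buzek–Hillery local
optimal cloner applied to the werner-like state (parameters `p`, `α`, `β = √(1−α²)`) has
positive semidefinite partial transpose (i.e. is separable) iff either `0 ≤ p ≤ √3/2`, or
`√3/2 < p ≤ 1` and `(2p−√3)/(4p) ≤ α² ≤ (√3+2p)/(4p)`. -/
theorem wernerlike_local_output_separability (p α : ℝ)
    (hp0 : 0 ≤ p) (hp1 : p ≤ 1) (hα0 : 0 ≤ α) (hα1 : α ≤ 1) :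
    (ptranspose ((1/4 : ℂ) • ((1 : Matrix (Fin 2 × Fin 2) (Fin 2 × Fin 2) ℂ)
        + ((2/3 * p * (2*α^2 - 1) : ℝ) : ℂ) • (pauli 2 ⊗ₖ 1 + 1 ⊗ₖ pauli 2)
        + (1/3 : ℂ) • ∑ j : Fin 3, pauli j ⊗ₖ pauli j))).PosSemidef
    ↔ ((0 ≤ p ∧ p ≤ Real.sqrt 3 / 2) ∨
       (Real.sqrt 3 / 2 < p ∧ p ≤ 1 ∧
        (2*p - Real.sqrt 3) / (4*p) ≤ α^2 ∧ α^2 ≤ (Real.sqrt 3 + 2*p) / (4*p))) :=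
  (posSemidef_ptranspose_localCloneOutput_iff _).trans
    (cloneBloch_sq_le_third_iff p (α ^ 2) hp0 hp1 (sq_nonneg α) (pow_le_one₀ hα0 hα1))
end

section
/- Let α ∈ [0,1], β = √(1−α²), and consider the two-qubit matrix ρ̃ = (1/4)·(I₄ + (3/5)(2α²−1)(σ₃⊗I₂ + I₂⊗σ₃) + (3/5)·(2αβ·σ₁⊗σ₁ − 2αβ·σ₂⊗σ₂ + σ₃⊗σ₃)). Then ρ̃^{T₂} fails to be positive semidefinite (equivalently, ρ̃ is entangled) if and only if (3−2√2)/6 < α² < (3+2√2)/6. This is the range for broadcasting of entanglement of the pure state α|00⟩+β|11⟩ via nonlocal optimal cloning. -/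
open Matrix Kronecker
open scoped ComplexOrder

/-!
The partial transpose of `ρ̃` is an X-shaped matrix: it is diagonal on `|00⟩` and `|11⟩`, with
entries `(1 + 6α²)/10` and `(7 - 6α²)/10`, and on `span {|01⟩, |10⟩}` it is the block
`[[1/10, e], [e, 1/10]]` with `e = 3αβ/5`, whose eigenvalues `1/10 ± e` belong to the eigenvectors
`|01⟩ ± |10⟩`. So it fails to be positive semidefinite exactly when `6αβ > 1`, i.e. when
`36α²(1 - α²) > 1`, i.e. when `α²` lies strictly between the roots `(3 ± 2√2)/6` of `36t² - 36t + 1`.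
-/

/-- Diagonal `(a, c, c, d)` in the basis `00, 01, 10, 11`, and real coherence `e` between `01`
and `10`. -/
def xMatrix (a c d e : ℝ) : Matrix (Fin 2 × Fin 2) (Fin 2 × Fin 2) ℂ :=
  Matrix.of fun p q =>
    if p = q then ((!![a, c; c, d] : Matrix (Fin 2) (Fin 2) ℝ) p.1 p.2 : ℂ)
    else if p = q.swap then (e : ℂ) else 0

lemma xMatrix_eq_sum_vecMulVec (a c d e : ℝ) :
    let v : Fin 2 × Fin 2 → Fin 2 × Fin 2 → ℂ := fun p => Pi.single p 1
    xMatrix a c d e =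
      a • vecMulVec (v (0, 0)) (star (v (0, 0))) + d • vecMulVec (v (1, 1)) (star (v (1, 1)))
        + ((c + e) / 2) • vecMulVec (v (0, 1) + v (1, 0)) (star (v (0, 1) + v (1, 0)))
        + ((c - e) / 2) • vecMulVec (v (0, 1) - v (1, 0)) (star (v (0, 1) - v (1, 0))) := by
  intro v
  ext ⟨i, μ⟩ ⟨j, ν⟩
  fin_cases i <;> fin_cases μ <;> fin_cases j <;> fin_cases ν <;>
    simp [xMatrix, v, vecMulVec_apply] <;> ring

theorem xMatrix_posSemidef_iff (a c d e : ℝ) :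
    (xMatrix a c d e).PosSemidef ↔ 0 ≤ a ∧ 0 ≤ d ∧ |e| ≤ c := by
  constructor
  · intro h
    have entry_nonneg (p : Fin 2 × Fin 2) : 0 ≤ (xMatrix a c d e p p).re :=
      Complex.nonneg_iff.mp h.diag_nonneg |>.1
    have block_form_nonneg (s : ℝ) (hs : s ^ 2 = 1) : 0 ≤ c + s * e := by
      have hform := h.dotProduct_mulVec_nonneg
        (Pi.single (0, 1) 1 + (s : ℂ) • Pi.single (1, 0) 1 : Fin 2 × Fin 2 → ℂ)
      simp [xMatrix, dotProduct, mulVec, Fintype.sum_prod_type, Pi.single_apply] at hform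
      have hform_re : 0 ≤ c + e * s + s * (e + c * s) := by exact_mod_cast hform
      linarith [show c + e * s + s * (e + c * s) = 2 * (c + s * e) by linear_combination c * hs]
    refine ⟨by simpa [xMatrix] using entry_nonneg (0, 0),
      by simpa [xMatrix] using entry_nonneg (1, 1), abs_le.mpr ⟨?_, ?_⟩⟩
    · linarith [block_form_nonneg 1 (by norm_num)]
    · linarith [block_form_nonneg (-1) (by norm_num)]
  · rintro ⟨ha, hd, he⟩
    obtain ⟨hce, hec⟩ : 0 ≤ (c + e) / 2 ∧ 0 ≤ (c - e) / 2 := by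
      constructor <;> linarith [abs_le.mp he]
    rw [xMatrix_eq_sum_vecMulVec]
    refine .add (.add (.add ?_ ?_) ?_) ?_ <;> exact (posSemidef_vecMulVec_self_star _).smul ‹_›

lemma ptranspose_cloneOutput_eq_xMatrix (z t : ℝ) :
    ptranspose ((1/4 : ℂ) • ((1 : Matrix (Fin 2 × Fin 2) (Fin 2 × Fin 2) ℂ)
        + (z : ℂ) • (pauli 2 ⊗ₖ 1 + 1 ⊗ₖ pauli 2)
        + (3/5 : ℂ) • ((t : ℂ) • (pauli 0 ⊗ₖ pauli 0) - (t : ℂ) • (pauli 1 ⊗ₖ pauli 1)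
            + pauli 2 ⊗ₖ pauli 2)))
      = xMatrix ((4/5 + z) / 2) (1/10) ((4/5 - z) / 2) (3 * t / 10) := by
  ext ⟨i, μ⟩ ⟨j, ν⟩
  fin_cases i <;> fin_cases μ <;> fin_cases j <;> fin_cases ν <;>
    simp [ptranspose, xMatrix, pauli, one_apply] <;> ring

lemma one_lt_six_mul_sqrt_iff {α : ℝ} (hα0 : 0 ≤ α) (hα1 : α ≤ 1) :
    1 < 6 * α * √(1 - α ^ 2) ↔
      (3 - 2 * √2) / 6 < α ^ 2 ∧ α ^ 2 < (3 + 2 * √2) / 6 := by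
  have hβ : √(1 - α ^ 2) ^ 2 = 1 - α ^ 2 := Real.sq_sqrt (by nlinarith)
  have h8 : (2 * √2) ^ 2 = 8 := by rw [mul_pow, Real.sq_sqrt zero_le_two]; norm_num
  calc 1 < 6 * α * √(1 - α ^ 2)
      ↔ 1 < (6 * α * √(1 - α ^ 2)) ^ 2 := (one_lt_sq_iff₀ (by positivity)).symm
    _ ↔ (6 * α ^ 2 - 3) ^ 2 < (2 * √2) ^ 2 := by
      rw [mul_pow, hβ, h8]; constructor <;> intro h <;> nlinarith
    _ ↔ |6 * α ^ 2 - 3| < 2 * √2 := by rw [sq_lt_sq, abs_of_nonneg (a := 2 * √2) (by positivity)]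
    _ ↔ _ := by rw [abs_lt]; constructor <;> rintro ⟨h1, h2⟩ <;> constructor <;> linarith

/-- Broadcasting range of the pure state `α|00⟩ + β|11⟩` via nonlocal optimal
cloning.  The clone output `ρ̃₁₂ = {(3/5)x, (3/5)x, (3/5)T}` of the Buzek–Hillery nonlocal
optimal cloner has non-positive-semidefinite partial transpose (i.e. is entangled) iff
`(3−2√2)/6 < α² < (3+2√2)/6`. -/
theorem pure_state_broadcasting_range_nonlocal (α : ℝ) (hα0 : 0 ≤ α) (hα1 : α ≤ 1) :
    ¬ (ptranspose ((1/4 : ℂ) • ((1 : Matrix (Fin 2 × Fin 2) (Fin 2 × Fin 2) ℂ)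
        + ((3/5 * (2*α^2 - 1) : ℝ) : ℂ) • (pauli 2 ⊗ₖ 1 + 1 ⊗ₖ pauli 2)
        + (3/5 : ℂ) • (((2 * α * Real.sqrt (1 - α^2) : ℝ) : ℂ) • (pauli 0 ⊗ₖ pauli 0)
            - ((2 * α * Real.sqrt (1 - α^2) : ℝ) : ℂ) • (pauli 1 ⊗ₖ pauli 1)
            + pauli 2 ⊗ₖ pauli 2)))).PosSemidef
    ↔ ((3 - 2*Real.sqrt 2) / 6 < α^2 ∧ α^2 < (3 + 2*Real.sqrt 2) / 6) := by
  rw [ptranspose_cloneOutput_eq_xMatrix, xMatrix_posSemidef_iff,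
    ← one_lt_six_mul_sqrt_iff hα0 hα1, abs_of_nonneg (by positivity)]
  have ha : 0 ≤ (4/5 + 3/5 * (2 * α ^ 2 - 1)) / 2 := by nlinarith
  have hd : 0 ≤ (4/5 - 3/5 * (2 * α ^ 2 - 1)) / 2 := by nlinarith
  simp only [ha, hd, true_and, not_le]
  constructor <;> intro h <;> linarith
end

section
/- Let p ∈ [0,1] and consider the two-qubit matrix ρ̃ = (1/4)·(I₄ + (3/5)p·(σ₁⊗σ₁ − σ₂⊗σ₂ + σ₃⊗σ₃)). Then ρ̃^{T₂} fails to be positive semidefinite (equivalently, ρ̃ is entangled) if and only if p > 5/9. Hence the Werner state can be broadcast via nonlocal optimal cloning exactly when 5/9 < p ≤ 1. -/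
open Matrix Kronecker
open scoped ComplexOrder

/-!
The partial transpose of `σ₁ ⊗ σ₁ - σ₂ ⊗ σ₂ + σ₃ ⊗ σ₃` is `2 • SWAP - 1`, so with `c = 3p/5` we get
`ρ̃^{T₂} = ((1 - c)/4) • 1 + (c/2) • SWAP`. The swap is a Hermitian involution whose eigenvalues
`±1` are both attained (on symmetric and antisymmetric vectors), hence `ρ̃^{T₂}` has eigenvalues
`(1 + c)/4` and `(1 - 3c)/4`; it is positive semidefinite iff `-1 ≤ c ≤ 1/3`, i.e., for `p ≥ 0`,
iff `p ≤ 5/9`.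
-/

namespace Matrix

variable {n 𝕜 : Type*} [Fintype n] [RCLike 𝕜]

theorem PosSemidef.nonneg_of_mulVec_eq_smul {M : Matrix n n 𝕜} (hM : M.PosSemidef) {v : n → 𝕜}
    (hv0 : v ≠ 0) {μ : ℝ} (hv : M *ᵥ v = (μ : 𝕜) • v) : 0 ≤ μ := by
  obtain ⟨t, ht, hvv⟩ := RCLike.pos_iff_exists_ofReal.1 (dotProduct_star_self_pos_iff.2 hv0)
  have hnonneg := hM.dotProduct_mulVec_nonneg v
  rw [hv, dotProduct_smul, smul_eq_mul, ← hvv, ← RCLike.ofReal_mul, RCLike.ofReal_nonneg]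
    at hnonneg
  exact (mul_nonneg_iff_of_pos_right ht).1 hnonneg

variable [DecidableEq n]

theorem posSemidef_one_add_of_involutive {S : Matrix n n 𝕜} (hS : S.IsHermitian)
    (hS2 : S * S = 1) : (1 + S).PosSemidef := by
  have h : (1 + S)ᴴ * (1 + S) = (2 : ℝ) • (1 + S) := by
    simp only [conjTranspose_add, conjTranspose_one, hS.eq, add_mul, mul_add, hS2, one_mul,
      mul_one, two_smul]
    abel
  have := (posSemidef_conjTranspose_mul_self (1 + S)).smul (a := (2⁻¹ : ℝ)) (by norm_num)
  rwa [h, smul_smul, inv_mul_cancel₀ two_ne_zero, one_smul] at this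

theorem posSemidef_smul_one_add_smul_iff {S : Matrix n n 𝕜} (hS : S.IsHermitian)
    (hS2 : S * S = 1) {v w : n → 𝕜} (hv0 : v ≠ 0) (hv : S *ᵥ v = v) (hw0 : w ≠ 0)
    (hw : S *ᵥ w = -w) (a b : ℝ) :
    ((a : 𝕜) • 1 + (b : 𝕜) • S).PosSemidef ↔ 0 ≤ a + b ∧ 0 ≤ a - b := by
  constructor
  · intro hM
    refine ⟨hM.nonneg_of_mulVec_eq_smul hv0 ?_, hM.nonneg_of_mulVec_eq_smul hw0 ?_⟩
    · rw [add_mulVec, smul_mulVec, smul_mulVec, one_mulVec, hv]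
      push_cast
      module
    · rw [add_mulVec, smul_mulVec, smul_mulVec, one_mulVec, hw]
      push_cast
      module
  · rintro ⟨hplus, hminus⟩
    -- `(1 ± S) / 2` are the spectral projections of `S`
    have hdecomp : (a : 𝕜) • 1 + (b : 𝕜) • S =
        ((a + b) / 2 : ℝ) • (1 + S) + ((a - b) / 2 : ℝ) • (1 + -S) := by
      rw [← RCLike.real_smul_eq_coe_smul, ← RCLike.real_smul_eq_coe_smul]
      module
    rw [hdecomp]
    exact ((posSemidef_one_add_of_involutive hS hS2).smul (by linarith)).add
      ((posSemidef_one_add_of_involutive hS.neg (by rw [neg_mul_neg, hS2])).smul (by linarith))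

section Swap

variable (𝕜) (m : Type*) [DecidableEq m]

abbrev swapMatrix : Matrix (m × m) (m × m) 𝕜 :=
  Equiv.Perm.permMatrix 𝕜 (Equiv.prodComm m m)

theorem isHermitian_swapMatrix : (swapMatrix 𝕜 m).IsHermitian := by
  rw [IsHermitian, conjTranspose_permMatrix, Equiv.Perm.inv_def, Equiv.prodComm_symm]

variable [Fintype m]

theorem swapMatrix_mul_self : swapMatrix 𝕜 m * swapMatrix 𝕜 m = 1 := by
  rw [← permMatrix_mul]
  convert permMatrix_one
  ext ⟨i, j⟩ <;> rfl

variable {𝕜 m}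

theorem swapMatrix_mulVec_single (x : m × m) :
    swapMatrix 𝕜 m *ᵥ Pi.single x 1 = Pi.single x.swap 1 := by
  rw [permMatrix_mulVec]
  ext y
  simp [Pi.single_apply, Prod.ext_iff, and_comm]

theorem posSemidef_smul_one_add_smul_swapMatrix_iff [Nontrivial m] (a b : ℝ) :
    ((a : 𝕜) • 1 + (b : 𝕜) • swapMatrix 𝕜 m).PosSemidef ↔ 0 ≤ a + b ∧ 0 ≤ a - b := by
  obtain ⟨i, j, hij⟩ := exists_pair_ne m
  have hswap : ((i, j) : m × m) ≠ (j, i) := by simp [hij]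
  have hsingle : (Pi.single (i, j) (1 : 𝕜) : m × m → 𝕜) ≠ Pi.single (j, i) 1 :=
    fun h => by simpa [hswap] using congr_fun h (i, j)
  refine posSemidef_smul_one_add_smul_iff (isHermitian_swapMatrix 𝕜 m) (swapMatrix_mul_self 𝕜 m)
    (v := Pi.single (i, j) 1 + Pi.single (j, i) 1) (w := Pi.single (i, j) 1 - Pi.single (j, i) 1)
    ?_ ?_ (sub_ne_zero.2 hsingle) ?_ a b
  · intro h
    simpa [hswap] using congr_fun h (i, j)
  · rw [mulVec_add, swapMatrix_mulVec_single, swapMatrix_mulVec_single, add_comm]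
    rfl
  · rw [mulVec_sub, swapMatrix_mulVec_single, swapMatrix_mulVec_single, neg_sub]
    rfl

end Swap

end Matrix

theorem ptranspose_add (ρ σ : Matrix (Fin 2 × Fin 2) (Fin 2 × Fin 2) ℂ) :
    ptranspose (ρ + σ) = ptranspose ρ + ptranspose σ :=
  rfl

theorem ptranspose_smul (c : ℂ) (ρ : Matrix (Fin 2 × Fin 2) (Fin 2 × Fin 2) ℂ) :
    ptranspose (c • ρ) = c • ptranspose ρ :=
  rfl

theorem ptranspose_one : ptranspose 1 = 1 := by
  ext ⟨i, μ⟩ ⟨j, ν⟩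
  simp only [ptranspose, of_apply, one_apply, Prod.ext_iff]
  grind

theorem ptranspose_pauli_correlation :
    ptranspose (pauli 0 ⊗ₖ pauli 0 - pauli 1 ⊗ₖ pauli 1 + pauli 2 ⊗ₖ pauli 2) =
      (2 : ℂ) • swapMatrix ℂ (Fin 2) - 1 := by
  ext ⟨i, μ⟩ ⟨j, ν⟩
  fin_cases i <;> fin_cases μ <;> fin_cases j <;> fin_cases ν <;>
    simp [ptranspose, pauli, one_apply] <;> norm_num

theorem ptranspose_smul_one_add_smul_pauli_correlation (c : ℝ) :
    ptranspose ((1/4 : ℂ) • (1 + (c : ℂ) •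
        (pauli 0 ⊗ₖ pauli 0 - pauli 1 ⊗ₖ pauli 1 + pauli 2 ⊗ₖ pauli 2))) =
      (((1 - c) / 4 : ℝ) : ℂ) • 1 + ((c / 2 : ℝ) : ℂ) • swapMatrix ℂ (Fin 2) := by
  rw [ptranspose_smul, ptranspose_add, ptranspose_one, ptranspose_smul,
    ptranspose_pauli_correlation]
  push_cast
  module

theorem werner_broadcasting_range_nonlocal_general (p : ℝ) (hp0 : 0 ≤ p) :
    ¬ (ptranspose ((1/4 : ℂ) • ((1 : Matrix (Fin 2 × Fin 2) (Fin 2 × Fin 2) ℂ)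
        + ((3/5 * p : ℝ) : ℂ) • (pauli 0 ⊗ₖ pauli 0 - pauli 1 ⊗ₖ pauli 1
            + pauli 2 ⊗ₖ pauli 2)))).PosSemidef
    ↔ 5/9 < p := by
  rw [ptranspose_smul_one_add_smul_pauli_correlation]
  refine (not_congr (posSemidef_smul_one_add_smul_swapMatrix_iff
    ((1 - 3/5 * p) / 4) (3/5 * p / 2))).trans ?_
  constructor
  · intro h
    by_contra hp
    exact h ⟨by linarith, by linarith⟩
  · rintro hp ⟨-, h⟩
    linarith

/-- The clone output `ρ̃₁₂ = {0, 0, (3/5)T}` of the Buzek–Hillery nonlocal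
optimal cloner applied to the Werner state (correlation matrix `T = diag(p, −p, p)`) has
non-positive-semidefinite partial transpose (i.e. is entangled) iff `p > 5/9`; hence the
Werner state can be broadcast via nonlocal optimal cloning exactly when `5/9 < p ≤ 1`. -/
theorem werner_broadcasting_range_nonlocal (p : ℝ) (hp0 : 0 ≤ p) (hp1 : p ≤ 1) :
    ¬ (ptranspose ((1/4 : ℂ) • ((1 : Matrix (Fin 2 × Fin 2) (Fin 2 × Fin 2) ℂ)
        + ((3/5 * p : ℝ) : ℂ) • (pauli 0 ⊗ₖ pauli 0 - pauli 1 ⊗ₖ pauli 1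
            + pauli 2 ⊗ₖ pauli 2)))).PosSemidef
    ↔ 5/9 < p :=
  werner_broadcasting_range_nonlocal_general p hp0
end
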